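/- arXiv:1308.5394 — 3 statements merged into one kernel-verified Lean document; each statement's English description precedes it below -/
import Mathlib

section
/- For every totally real cubic number field E, if (e₁, e₂) is any ℤ-basis of the rank-2 free ℤ-module O_E/ℤ and G is the 2×2 Gram matrix with entries G_{ij} = B(e_i, e_j), where B is the symmetric bilinear form associated with Q_E (i.e. B(x,y) = (Q_E(x+y) − Q_E(x) − Q_E(y))/2), then 3 · det G = D_E, the discriminant of E. In particular det G is independent of the choice of basis. -/
open scoped BigOperators
open NumberField Filter

noncomputable section

/-- A totally real cubic number field, realized as a subfield of `ℝ`. -/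
structure TRCubicField : Type where
  K : IntermediateField ℚ ℝ
  dim3 : Module.finrank ℚ K = 3
  totallyReal : ∀ φ : ↥K →+* ℂ, ∀ x : ↥K, (φ x).im = 0

namespace TRCubicField

instance (E : TRCubicField) : FiniteDimensional ℚ E.K :=
  FiniteDimensional.of_finrank_pos (by rw [E.dim3]; norm_num)

instance (E : TRCubicField) : NumberField ↥E.K where
  to_charZero := inferInstance
  to_finiteDimensional := inferInstance

/-- The quotient `O_E/ℤ` of the ring of integers by `ℤ = ℤ·1`. -/
abbrev intsModZ (E : TRCubicField) :=
  (𝓞 E.K) ⧸ AddSubgroup.zmultiples (1 : 𝓞 E.K)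

/-- The quadratic form `Q_E(ξ) = Tr_{E/ℚ}(ξ²) - (1/3)·(Tr_{E/ℚ} ξ)²` on `O_E`. -/
def Q (E : TRCubicField) (x : 𝓞 E.K) : ℝ :=
  ((Algebra.trace ℚ E.K ((x : E.K) ^ 2) : ℚ) : ℝ)
    - (1 / 3) * ((Algebra.trace ℚ E.K (x : E.K) : ℚ) : ℝ) ^ 2

/-- `Q_E` descends to `O_E/ℤ` (it is invariant under translation by `ℤ`), so evaluating
it on any representative gives a well-defined function on the quotient. -/
def Qbar (E : TRCubicField) (ξ : E.intsModZ) : ℝ := E.Q ξ.out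

/-- The first successive minimum `m₁(E)` of `Q_E` on `O_E/ℤ`. -/
def m1 (E : TRCubicField) : ℝ :=
  sInf {r : ℝ | ∃ ξ : E.intsModZ, ξ ≠ 0 ∧ E.Qbar ξ = r}

/-- The second successive minimum `m₂(E)` of `Q_E` on `O_E/ℤ`. -/
def m2 (E : TRCubicField) : ℝ :=
  sInf {r : ℝ | ∃ ξ η : E.intsModZ,
    LinearIndependent ℤ ![ξ, η] ∧ E.Qbar ξ ≤ r ∧ E.Qbar η ≤ r}

/-- `ρ_E = res_{s=1} ζ_E(s) = 4·h_E·R_E/√(D_E)` by the analytic class number formula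
(for a totally real cubic field). -/
def rho (E : TRCubicField) : ℝ :=
  4 * (NumberField.classNumber E.K : ℝ) * NumberField.Units.regulator E.K /
    Real.sqrt (NumberField.discr E.K : ℝ)

/-- The number of nonzero `ξ ∈ O_E/ℤ` with `Q_E(ξ) ≤ X`. -/
def latticeCount (E : TRCubicField) (X : ℝ) : ℕ :=
  Nat.card {ξ : E.intsModZ // ξ ≠ 0 ∧ E.Qbar ξ ≤ X}

end TRCubicField

/-!
Lifting a `ℤ`-basis `(e₁, e₂)` of `O_E/ℤ` to `ẽ₁, ẽ₂ ∈ O_E`, the family `(1, ẽ₁, ẽ₂)` is a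
`ℤ`-basis of `O_E`, so `D_E` is the determinant of its trace matrix, whose corner entry is
`Tr 1 = 3`. Taking the Schur complement of that corner leaves `3` times the determinant of
`Tr(ẽᵢẽⱼ) - Tr ẽᵢ · Tr ẽⱼ / 3`, and these entries are exactly `B(eᵢ, eⱼ)`.
-/

theorem Module.Basis.exists_fin_cons_of_quotient_zmultiples {G : Type*} [AddCommGroup G] {g : G}
    (hg : ¬IsOfFinAddOrder g) {n : ℕ}
    (b : Module.Basis (Fin n) ℤ (G ⧸ AddSubgroup.zmultiples g)) :
    ∃ c : Module.Basis (Fin (n + 1)) ℤ G,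
      c 0 = g ∧ ∀ i, (c i.succ : G ⧸ AddSubgroup.zmultiples g) = b i := by
  set f : Fin n → G := fun i ↦ (b i).out
  have hf : ∀ i, (f i : G ⧸ AddSubgroup.zmultiples g) = b i := fun i ↦ QuotientAddGroup.out_eq' _
  have hli : LinearIndependent ℤ (Fin.cons g f : Fin (n + 1) → G) := by
    rw [Fintype.linearIndependent_iff]
    intro a ha
    rw [Fin.sum_univ_succ] at ha
    have htail : ∀ i : Fin n, a i.succ = 0 := by
      refine Fintype.linearIndependent_iff.mp b.linearIndependent _ ?_
      simpa [hf, (QuotientAddGroup.eq_zero_iff g).mpr (AddSubgroup.mem_zmultiples g)] using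
        congrArg (QuotientAddGroup.mk (s := AddSubgroup.zmultiples g)) ha
    have hhead : a 0 = 0 :=
      injective_zsmul_iff_not_isOfFinAddOrder.mpr hg (by simpa [htail] using ha)
    exact Fin.cases hhead htail
  have hsp : ⊤ ≤ Submodule.span ℤ (Set.range (Fin.cons g f : Fin (n + 1) → G)) := by
    rintro x -
    obtain ⟨k, hk⟩ : x - ∑ i, b.repr x i • f i ∈ AddSubgroup.zmultiples g := by
      rw [← QuotientAddGroup.eq_zero_iff]
      simp [hf, b.sum_repr]
    refine (Submodule.mem_span_range_iff_exists_fun ℤ).mpr ⟨Fin.cons k (b.repr x), ?_⟩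
    simp [Fin.sum_univ_succ, hk]
  exact ⟨.mk hli hsp, by simp, by simp [hf]⟩

theorem Matrix.det_fin_three_eq_mul_det_schur {K : Type*} [Field K]
    (A : Matrix (Fin 3) (Fin 3) K) (h : A 0 0 ≠ 0) :
    A.det = A 0 0 *
      (Matrix.of fun i j : Fin 2 ↦ A i.succ j.succ - A i.succ 0 * A 0 j.succ / A 0 0).det := by
  simp only [det_fin_three, det_fin_two, of_apply, Fin.succ_zero_eq_one, Fin.succ_one_eq_two]
  field_simp
  ring

namespace TRCubicField

variable (E : TRCubicField)

theorem trace_int_one : Algebra.trace ℤ (𝓞 E.K) 1 = 3 := by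
  simpa [RingOfIntegers.rank, E.dim3] using Algebra.trace_algebraMap (S := 𝓞 E.K) (1 : ℤ)

theorem Q_eq_trace_int (x : 𝓞 E.K) :
    E.Q x = Algebra.trace ℤ (𝓞 E.K) (x ^ 2) - (Algebra.trace ℤ (𝓞 E.K) x : ℝ) ^ 2 / 3 := by
  simp only [Q, ← Algebra.coe_trace_int, ← algebraMap.coe_pow]
  push_cast
  ring

theorem Q_add_intCast (x : 𝓞 E.K) (n : ℤ) : E.Q (x + n) = E.Q x := by
  have hn : (n : 𝓞 E.K) = n • 1 := (zsmul_one n).symm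
  have hsq : (x + n) ^ 2 = x ^ 2 + (2 * n) • x + n ^ 2 • 1 := by
    simp only [zsmul_eq_mul]
    push_cast
    ring
  rw [Q_eq_trace_int, Q_eq_trace_int, hsq, hn]
  simp only [map_add, map_zsmul, trace_int_one, smul_eq_mul]
  push_cast
  ring

theorem Qbar_mk (x : 𝓞 E.K) : E.Qbar x = E.Q x := by
  obtain ⟨⟨_, n, rfl⟩, h⟩ := QuotientAddGroup.mk_out_eq_add (AddSubgroup.zmultiples (1 : 𝓞 E.K)) x
  rw [Qbar, h]
  simpa using E.Q_add_intCast x n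

theorem Q_add_sub_sub_div_two (x y : 𝓞 E.K) :
    (E.Q (x + y) - E.Q x - E.Q y) / 2 = Algebra.trace ℤ (𝓞 E.K) (x * y)
      - (Algebra.trace ℤ (𝓞 E.K) x * Algebra.trace ℤ (𝓞 E.K) y : ℝ) / 3 := by
  have hsq : (x + y) ^ 2 = x ^ 2 + y ^ 2 + (x * y + x * y) := by ring
  simp only [Q_eq_trace_int, hsq, map_add]
  push_cast
  ring

end TRCubicField

/-- For any `ℤ`-basis `(e₁, e₂)` of `O_E/ℤ`, three times the determinant
of the Gram matrix of the polarization `B(x,y) = (Q_E(x+y) - Q_E(x) - Q_E(y))/2` equals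
the discriminant `D_E`. -/
theorem statement5 (E : TRCubicField) (b : Module.Basis (Fin 2) ℤ E.intsModZ) :
    3 * Matrix.det (Matrix.of fun i j : Fin 2 =>
        (E.Qbar (b i + b j) - E.Qbar (b i) - E.Qbar (b j)) / 2)
      = (NumberField.discr E.K : ℝ) := by
  obtain ⟨c, hc0, hc⟩ := Module.Basis.exists_fin_cons_of_quotient_zmultiples
    (not_isOfFinAddOrder_of_isAddTorsionFree one_ne_zero) b
  rw [← NumberField.discr_eq_discr _ c, Algebra.discr_def, Int.cast_det,
    Matrix.det_fin_three_eq_mul_det_schur _ (by simp [hc0, TRCubicField.trace_int_one])]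
  simp [Algebra.traceMatrix_apply, hc0, TRCubicField.trace_int_one, ← hc, ← QuotientAddGroup.mk_add,
    TRCubicField.Qbar_mk, TRCubicField.Q_add_sub_sub_div_two]
end
end

section
/- For all integers m, n ≥ 1 and every Schwartz function Φ : ℝ^m × ℝ^n → ℂ, there exist nonnegative Schwartz functions φ₁ : ℝ^m → ℝ and φ₂ : ℝ^n → ℝ such that |Φ(x, y)| ≤ φ₁(x) · φ₂(y) for all x ∈ ℝ^m and y ∈ ℝ^n. -/
/-!
Let `S t` be the supremum of `‖Φ z‖` over `‖z‖² ≥ t`. It is antitone and decreases faster than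
any power of `t`, and `‖Φ (x, y)‖ ≤ S (max ‖x‖² ‖y‖²) ≤ √(S ‖x‖²) · √(S ‖y‖²)`. Mollifying
`t ↦ √(S (|t| - 1))` with a bump function supported in the unit ball gives a nonnegative Schwartz
function `G` on `ℝ` with `√(S |t|) ≤ G t`, since the mollifier only averages values of the antitone
function at points of norm at most `|t| + 1`; its derivatives are bounded by `√(S (|t| - 2))` times
constants. Then `φ₁ x = G ‖x‖²` and `φ₂ y = G ‖y‖²` work; the squared norm is used because it is
smooth.
-/

noncomputable section

open MeasureTheory Set Function Metric ContinuousLinearMap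
open scoped Convolution ContDiff SchwartzMap

def RapidlyDecreasing (h : ℝ → ℝ) : Prop :=
  ∀ k : ℕ, ∃ C, ∀ t, 0 ≤ t → t ^ k * h t ≤ C

theorem RapidlyDecreasing.sqrt {h : ℝ → ℝ} (hh : RapidlyDecreasing h) :
    RapidlyDecreasing fun t => √(h t) := by
  intro k
  obtain ⟨C, hC⟩ := hh (k * 2)
  refine ⟨√C, fun t ht => ?_⟩
  calc t ^ k * √(h t) = √((t ^ k) ^ 2 * h t) := by
        rw [Real.sqrt_mul (by positivity), Real.sqrt_sq (by positivity)]
    _ ≤ √C := Real.sqrt_le_sqrt (by rw [← pow_mul]; exact hC t ht)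

theorem RapidlyDecreasing.exists_abs_pow_mul_comp_abs_sub_le {h : ℝ → ℝ} (hh : RapidlyDecreasing h)
    (hA : Antitone h) (h0 : ∀ t, 0 ≤ h t) {a : ℝ} (ha : 0 ≤ a) (k : ℕ) :
    ∃ C, ∀ x, |x| ^ k * h (|x| - a) ≤ C := by
  obtain ⟨C, hC⟩ := hh k
  refine ⟨max ((2 * a) ^ k * h (-a)) (2 ^ k * C), fun x => ?_⟩
  rcases le_or_gt |x| (2 * a) with hx | hx
  · refine le_max_of_le_left ?_
    have : h (|x| - a) ≤ h (-a) := hA (by linarith [abs_nonneg x])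
    gcongr
    exact h0 _
  · refine le_max_of_le_right ?_
    calc |x| ^ k * h (|x| - a) ≤ (2 * (|x| - a)) ^ k * h (|x| - a) := by
          gcongr
          · exact h0 _
          · linarith
      _ = 2 ^ k * ((|x| - a) ^ k * h (|x| - a)) := by rw [mul_pow]; ring
      _ ≤ 2 ^ k * C := by gcongr; exact hC _ (by linarith)

theorem tsupport_iteratedDeriv_subset {𝕜 F : Type*} [NontriviallyNormedField 𝕜]
    [NormedAddCommGroup F] [NormedSpace 𝕜 F] (f : 𝕜 → F) (n : ℕ) :
    tsupport (iteratedDeriv n f) ⊆ tsupport f := by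
  induction n with
  | zero => rw [iteratedDeriv_zero]
  | succ n ih => exact iteratedDeriv_succ (f := f) ▸ tsupport_deriv_subset.trans ih

theorem HasCompactSupport.iteratedDeriv {𝕜 F : Type*} [NontriviallyNormedField 𝕜]
    [NormedAddCommGroup F] [NormedSpace 𝕜 F] {f : 𝕜 → F} (hf : HasCompactSupport f) (n : ℕ) :
    HasCompactSupport (iteratedDeriv n f) :=
  hf.mono' ((subset_tsupport _).trans (tsupport_iteratedDeriv_subset f n))

section Convolution

variable {𝕜 G E E' F : Type*} [RCLike 𝕜] [NormedAddCommGroup E] [NormedSpace 𝕜 E]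
  [NormedAddCommGroup E'] [NormedSpace 𝕜 E'] [NormedAddCommGroup F] [NormedSpace ℝ F]
  [NormedSpace 𝕜 F]

theorem iteratedDeriv_convolution_left {μ : Measure 𝕜}
    [μ.IsAddLeftInvariant] [μ.IsNegInvariant] [SFinite μ] (L : E →L[𝕜] E' →L[𝕜] F)
    {f : 𝕜 → E} {g : 𝕜 → E'} (hcf : HasCompactSupport f) (hf : ContDiff 𝕜 ∞ f)
    (hg : LocallyIntegrable g μ) (n : ℕ) :
    iteratedDeriv n (f ⋆[L, μ] g) = iteratedDeriv n f ⋆[L, μ] g := by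
  induction n with
  | zero => simp only [iteratedDeriv_zero]
  | succ n ih =>
    ext x
    rw [iteratedDeriv_succ, ih, iteratedDeriv_succ]
    have hf' : ContDiff 𝕜 1 (iteratedDeriv n f) := by
      rw [iteratedDeriv_eq_iterate]
      exact (hf.iterate_deriv n).of_le (mod_cast le_top)
    exact ((hcf.iteratedDeriv n).hasDerivAt_convolution_left L hf' hg x).deriv

theorem norm_convolution_le_of_support_subset_ball [SeminormedAddCommGroup G] [MeasurableSpace G]
    [BorelSpace G] [SecondCountableTopology G] {μ : Measure G} [μ.IsAddLeftInvariant] [SFinite μ]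
    (L : E →L[𝕜] E' →L[𝕜] F) {f : G → E} {g : G → E'} {x₀ : G} {R ε : ℝ} (hε : 0 ≤ ε)
    (hif : Integrable f μ) (hf : support f ⊆ ball 0 R) (hmg : AEStronglyMeasurable g μ)
    (hg : ∀ x ∈ ball x₀ R, ‖g x‖ ≤ ε) :
    ‖(f ⋆[L, μ] g) x₀‖ ≤ (‖L‖ * ∫ x, ‖f x‖ ∂μ) * ε := by
  simpa using dist_convolution_le' (z₀ := 0) L hε hif hf hmg (by simpa using hg)

theorem le_convolution_of_support_subset_ball [SeminormedAddCommGroup G]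
    [MeasurableSpace G] {μ : Measure G} {f g : G → ℝ} {x₀ : G} {R c : ℝ}
    (hf : support f ⊆ ball 0 R) (hnf : ∀ x, 0 ≤ f x) (hintf : ∫ x, f x ∂μ = 1)
    (hfg : ConvolutionExistsAt f g x₀ (lsmul ℝ ℝ) μ) (hg : ∀ x ∈ ball x₀ R, c ≤ g x) :
    c ≤ (f ⋆[lsmul ℝ ℝ, μ] g) x₀ := by
  have hle : ∀ t, f t * c ≤ f t * g (x₀ - t) := fun t => by
    by_cases ht : t ∈ support f
    · refine mul_le_mul_of_nonneg_left (hg _ ?_) (hnf t)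
      rw [sub_eq_add_neg, add_mem_ball_iff_norm, norm_neg, ← mem_ball_zero_iff]
      exact hf ht
    · simp [notMem_support.1 ht]
  calc c = ∫ t, f t * c ∂μ := by rw [integral_mul_const, hintf, one_mul]
    _ ≤ ∫ t, f t * g (x₀ - t) ∂μ :=
        integral_mono ((integrable_of_integral_eq_one hintf).mul_const c) hfg hle
    _ = (f ⋆[lsmul ℝ ℝ, μ] g) x₀ := by simp only [convolution_def, lsmul_apply, smul_eq_mul]

end Convolution

theorem Antitone.locallyIntegrable_comp_abs_sub {h : ℝ → ℝ} (hA : Antitone h) (h0 : ∀ t, 0 ≤ h t)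
    (a : ℝ) : LocallyIntegrable (fun t => h (|t| - a)) := by
  have hmeas : Measurable fun t => h (|t| - a) :=
    hA.measurable.comp ((continuous_abs.sub continuous_const).measurable)
  refine (memLp_top_of_bound hmeas.aestronglyMeasurable (h (-a)) (ae_of_all _ fun t => ?_))
    |>.locallyIntegrable le_top
  rw [Real.norm_of_nonneg (h0 _)]
  exact hA (by linarith [abs_nonneg t])

theorem exists_norm_pow_mul_iteratedFDeriv_le_of_iteratedDeriv_le {F : Type*}
    [NormedAddCommGroup F] [NormedSpace ℝ F] {f : ℝ → F} {g : ℝ → ℝ}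
    (hg : ∀ k : ℕ, ∃ C, ∀ x, |x| ^ k * g x ≤ C)
    (hf : ∀ n : ℕ, ∃ D, 0 ≤ D ∧ ∀ x, ‖iteratedDeriv n f x‖ ≤ D * g x) (k n : ℕ) :
    ∃ C, ∀ x, ‖x‖ ^ k * ‖iteratedFDeriv ℝ n f x‖ ≤ C := by
  obtain ⟨C, hC⟩ := hg k
  obtain ⟨D, hD, hfD⟩ := hf n
  refine ⟨D * C, fun x => ?_⟩
  rw [norm_iteratedFDeriv_eq_norm_iteratedDeriv, Real.norm_eq_abs]
  calc |x| ^ k * ‖iteratedDeriv n f x‖ ≤ |x| ^ k * (D * g x) := by gcongr; exact hfD x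
    _ = D * (|x| ^ k * g x) := by ring
    _ ≤ D * C := by gcongr; exact hC x

theorem RapidlyDecreasing.exists_schwartzMap_majorant {h : ℝ → ℝ} (hh : RapidlyDecreasing h)
    (hA : Antitone h) (h0 : ∀ t, 0 ≤ h t) :
    ∃ G : 𝓢(ℝ, ℝ), (∀ x, 0 ≤ G x) ∧ ∀ x, h |x| ≤ G x := by
  let b : ContDiffBump (0 : ℝ) := ⟨1 / 4, 1 / 2, by norm_num, by norm_num⟩
  set ρ : ℝ → ℝ := b.normed volume
  have hρ_supp : tsupport ρ ⊆ ball 0 1 := by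
    rw [b.tsupport_normed_eq]; exact closedBall_subset_ball (by norm_num)
  set w : ℝ → ℝ := fun t => h (|t| - 1)
  have hw : LocallyIntegrable w := hA.locallyIntegrable_comp_abs_sub h0 1
  have hw_le : ∀ x, ∀ t ∈ ball x 1, ‖w t‖ ≤ h (|x| - 2) := fun x t ht => by
    rw [mem_ball, Real.dist_eq] at ht
    rw [Real.norm_of_nonneg (h0 _)]
    exact hA (by linarith [abs_sub_abs_le_abs_sub x t, abs_sub_comm t x])
  have hw_ge : ∀ x, ∀ t ∈ ball x 1, h |x| ≤ w t := fun x t ht => by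
    rw [mem_ball, Real.dist_eq] at ht
    exact hA (by linarith [abs_sub_abs_le_abs_sub t x])
  set G := ρ ⋆[lsmul ℝ ℝ, volume] w
  have hG_deriv : ∀ n, ∃ D, 0 ≤ D ∧ ∀ x, ‖iteratedDeriv n G x‖ ≤ D * h (|x| - 2) := fun n => by
    refine ⟨‖(lsmul ℝ ℝ : ℝ →L[ℝ] ℝ →L[ℝ] ℝ)‖ * ∫ t, ‖iteratedDeriv n ρ t‖, by positivity,
      fun x => ?_⟩
    rw [iteratedDeriv_convolution_left _ b.hasCompactSupport_normed b.contDiff_normed hw]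
    have hint : Integrable (iteratedDeriv n ρ) :=
      (b.contDiff_normed.continuous_iteratedDeriv n (mod_cast le_top)
        |>.integrable_of_hasCompactSupport (b.hasCompactSupport_normed.iteratedDeriv n))
    exact norm_convolution_le_of_support_subset_ball _ (h0 _) hint
      ((subset_tsupport _).trans ((tsupport_iteratedDeriv_subset ρ n).trans hρ_supp))
      hw.aestronglyMeasurable (hw_le x)
  refine ⟨⟨G, b.hasCompactSupport_normed.contDiff_convolution_left _ b.contDiff_normed hw,
    exists_norm_pow_mul_iteratedFDeriv_le_of_iteratedDeriv_le
      (hh.exists_abs_pow_mul_comp_abs_sub_le hA h0 zero_le_two) hG_deriv⟩,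
    fun x => ?_, fun x => ?_⟩
  · exact integral_nonneg fun t => mul_nonneg (b.nonneg_normed _) (h0 _)
  · exact le_convolution_of_support_subset_ball ((subset_tsupport _).trans hρ_supp)
      b.nonneg_normed b.integral_normed
      (b.hasCompactSupport_normed.convolutionExists_left _ b.continuous_normed hw x) (hw_ge x)

namespace SchwartzMap

variable {E F V : Type*} [NormedAddCommGroup V] [NormedSpace ℝ V]

section TailSup

variable [NormedAddCommGroup E] [NormedSpace ℝ E] (f : 𝓢(E, V))

/-- The `else 0` branch lets the supremum run over all of `E` without changing its value. -/
def normSqTailSup (t : ℝ) : ℝ :=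
  ⨆ z : E, if t ≤ ‖z‖ ^ 2 then ‖f z‖ else 0

theorem bddAbove_normSqTailSup (t : ℝ) :
    BddAbove (range fun z : E => if t ≤ ‖z‖ ^ 2 then ‖f z‖ else 0) := by
  refine ⟨SchwartzMap.seminorm ℝ 0 0 f, forall_mem_range.2 fun z => ?_⟩
  split_ifs
  · exact f.norm_le_seminorm ℝ z
  · exact apply_nonneg _ _

theorem normSqTailSup_nonneg (t : ℝ) : 0 ≤ f.normSqTailSup t :=
  Real.iSup_nonneg fun z => by split_ifs <;> simp

theorem norm_le_normSqTailSup {t : ℝ} {z : E} (hz : t ≤ ‖z‖ ^ 2) : ‖f z‖ ≤ f.normSqTailSup t := by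
  calc ‖f z‖ = if t ≤ ‖z‖ ^ 2 then ‖f z‖ else 0 := (if_pos hz).symm
    _ ≤ f.normSqTailSup t := le_ciSup (f.bddAbove_normSqTailSup t) z

theorem antitone_normSqTailSup : Antitone f.normSqTailSup := fun t₁ t₂ h12 =>
  ciSup_mono (f.bddAbove_normSqTailSup t₁) fun z => by
    split_ifs with h₂ h₁ h₁ <;> first | exact le_rfl | exact norm_nonneg _ | linarith

theorem rapidlyDecreasing_normSqTailSup : RapidlyDecreasing f.normSqTailSup := by
  intro k
  refine ⟨SchwartzMap.seminorm ℝ (2 * k) 0 f, fun t ht => ?_⟩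
  rw [normSqTailSup, Real.mul_iSup_of_nonneg (by positivity)]
  refine Real.iSup_le (fun z => ?_) (apply_nonneg _ _)
  split_ifs with hz
  · calc t ^ k * ‖f z‖ ≤ (‖z‖ ^ 2) ^ k * ‖f z‖ := by gcongr
      _ = ‖z‖ ^ (2 * k) * ‖f z‖ := by rw [← pow_mul]
      _ ≤ _ := f.norm_pow_mul_le_seminorm ℝ (2 * k) z
  · simp

end TailSup

def compNormSq [NormedAddCommGroup E] [InnerProductSpace ℝ E] (G : 𝓢(ℝ, V)) : 𝓢(E, V) :=
  compCLM ℝ (Function.hasTemperateGrowth_norm_sq E) ⟨1, 1, fun x => by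
    rw [norm_pow, norm_norm]; nlinarith [sq_nonneg (‖x‖ - 1)]⟩ G

theorem exists_nonneg_majorant_mul [NormedAddCommGroup E] [InnerProductSpace ℝ E]
    [NormedAddCommGroup F] [InnerProductSpace ℝ F] (Φ : 𝓢(E × F, V)) :
    ∃ (φ₁ : 𝓢(E, ℝ)) (φ₂ : 𝓢(F, ℝ)), (∀ x, 0 ≤ φ₁ x) ∧ (∀ y, 0 ≤ φ₂ y) ∧
      ∀ x y, ‖Φ (x, y)‖ ≤ φ₁ x * φ₂ y := by
  set S := Φ.normSqTailSup
  have hS : Antitone S := Φ.antitone_normSqTailSup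
  obtain ⟨G, hG0, hG⟩ := Φ.rapidlyDecreasing_normSqTailSup.sqrt.exists_schwartzMap_majorant
    (fun a b hab => Real.sqrt_le_sqrt (hS hab)) fun t => Real.sqrt_nonneg _
  refine ⟨G.compNormSq, G.compNormSq, fun x => hG0 _, fun y => hG0 _, fun x y => ?_⟩
  have hG' : ∀ a : ℝ, 0 ≤ a → √(S a) ≤ G a := fun a ha => by
    simpa only [abs_of_nonneg ha] using hG a
  have hab : max (‖x‖ ^ 2) (‖y‖ ^ 2) ≤ ‖(x, y)‖ ^ 2 :=
    max_le (by gcongr; exact norm_fst_le (x, y)) (by gcongr; exact norm_snd_le (x, y))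
  set a := ‖x‖ ^ 2
  set b := ‖y‖ ^ 2
  calc ‖Φ (x, y)‖ ≤ S (max a b) := Φ.norm_le_normSqTailSup hab
    _ = √(S (max a b)) * √(S (max a b)) := (Real.mul_self_sqrt (Φ.normSqTailSup_nonneg _)).symm
    _ ≤ √(S a) * √(S b) := by gcongr <;> apply hS <;> simp
    _ ≤ G a * G b :=
        mul_le_mul (hG' a (by positivity)) (hG' b (by positivity)) (Real.sqrt_nonneg _) (hG0 _)
    _ = G.compNormSq x * G.compNormSq y := rfl

end SchwartzMap

theorem statement14_general (m n : ℕ)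
    (Φ : SchwartzMap (EuclideanSpace ℝ (Fin m) × EuclideanSpace ℝ (Fin n)) ℂ) :
    ∃ (φ₁ : SchwartzMap (EuclideanSpace ℝ (Fin m)) ℝ)
      (φ₂ : SchwartzMap (EuclideanSpace ℝ (Fin n)) ℝ),
      (∀ x, 0 ≤ φ₁ x) ∧ (∀ y, 0 ≤ φ₂ y) ∧
      ∀ (x : EuclideanSpace ℝ (Fin m)) (y : EuclideanSpace ℝ (Fin n)),
        ‖Φ (x, y)‖ ≤ φ₁ x * φ₂ y :=
  Φ.exists_nonneg_majorant_mul

/-- For all `m, n ≥ 1` and every Schwartz function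
`Φ : ℝ^m × ℝ^n → ℂ` there are nonnegative Schwartz functions `φ₁ : ℝ^m → ℝ` and
`φ₂ : ℝ^n → ℝ` with `|Φ(x,y)| ≤ φ₁(x)·φ₂(y)` for all `x, y`. -/
theorem statement14 (m n : ℕ) (hm : 1 ≤ m) (hn : 1 ≤ n)
    (Φ : SchwartzMap (EuclideanSpace ℝ (Fin m) × EuclideanSpace ℝ (Fin n)) ℂ) :
    ∃ (φ₁ : SchwartzMap (EuclideanSpace ℝ (Fin m)) ℝ)
      (φ₂ : SchwartzMap (EuclideanSpace ℝ (Fin n)) ℝ),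
      (∀ x, 0 ≤ φ₁ x) ∧ (∀ y, 0 ≤ φ₂ y) ∧
      ∀ (x : EuclideanSpace ℝ (Fin m)) (y : EuclideanSpace ℝ (Fin n)),
        ‖Φ (x, y)‖ ≤ φ₁ x * φ₂ y :=
  statement14_general m n Φ
end
end

section
/- Let n ≥ 1 be an integer and r > 1 a real number. There exists a constant C > 0, depending only on n and r, with the following property: for every function Ψ : ℝ^n → ℂ with M := sup_{x ∈ ℝ^n} (1 + ‖x‖)^{n+r} · |Ψ(x)| < ∞ and every s > 0, one has ∑_{x ∈ ℤ^n, x ≠ 0} |Ψ(s·x)| ≤ C · M · s^{−n} if 0 < s ≤ 1, and ∑_{x ∈ ℤ^n, x ≠ 0} |Ψ(s·x)| ≤ C · M · s^{−r} if s ≥ 1. -/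
/-!
By hypothesis `|Ψ(y)| ≤ M (1 + ‖y‖)^{-(n+r)}`, so everything reduces to the lattice sums
`∑_{x ≠ 0} (1 + s‖x‖)^{-(n+r)}`, which are compared with the fixed convergent sum
`S = ∑_{x ∈ ℤⁿ} (1 + ‖x‖)^{-(n+r)}`. This `S` is finite because, for the sup norm,
`(1 + ‖x‖)ⁿ` dominates `∏ (1 + |xᵢ|)`, so `S` is at most the `n`-th power of a one-dimensional
`p`-series with `p = (n+r)/n > 1`.
For `s ≥ 1` and `x ≠ 0` one has `1 + ‖x‖ ≤ (2/s)(1 + s‖x‖)`, giving `(2/s)^{n+r} S`.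
For `s ≤ 1` we cut `ℤⁿ` into the `Lⁿ` residue classes modulo `L = ⌈1/s⌉`: writing `x = L q + m`
with `0 ≤ mᵢ < L` gives `1 + ‖q‖ ≤ 3 (1 + s‖x‖)`, hence the bound `3^{n+r} (2/s)ⁿ S`.
Both bounds are absorbed into `C = 6^{n+r} S`.
-/

open scoped ENNReal

theorem Real.rpow_neg_le_mul_rpow_neg_of_le_mul {a b c N : ℝ} (ha : 0 < a) (hc : 0 < c)
    (hN : 0 ≤ N) (h : a ≤ c * b) : b ^ (-N) ≤ c ^ N * a ^ (-N) := by
  have hb : 0 < b := pos_of_mul_pos_right (ha.trans_le h) hc.le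
  calc b ^ (-N) = c ^ N * (c * b) ^ (-N) := by
        rw [Real.mul_rpow hc.le hb.le, Real.rpow_neg hc.le, mul_inv_cancel_left₀ (by positivity)]
    _ ≤ c ^ N * a ^ (-N) :=
        mul_le_mul_of_nonneg_left (Real.rpow_le_rpow_of_nonpos ha h (neg_nonpos.2 hN))
          (by positivity)

theorem ENNReal.tsum_fin_pi_prod {α : Type*} (f : α → ℝ≥0∞) (n : ℕ) :
    ∑' x : Fin n → α, ∏ i, f (x i) = (∑' a, f a) ^ n := by
  induction n with
  | zero => simp
  | succ n ih =>
    rw [← (Fin.consEquiv fun _ => α).tsum_eq, ENNReal.tsum_prod', pow_succ', ← ih,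
      ← ENNReal.tsum_mul_right]
    simp [Fin.prod_univ_succ, ENNReal.tsum_mul_left]

theorem summable_one_add_norm_int_rpow {b : ℝ} (hb : 1 < b) :
    Summable fun k : ℤ => (1 + ‖k‖) ^ (-b) := by
  refine (Real.summable_abs_int_rpow hb).of_norm_bounded_eventually ?_
  filter_upwards [(Set.finite_singleton (0 : ℤ)).compl_mem_cofinite] with k hk
  have hk : 0 < |(k : ℝ)| := by simpa using hk
  rw [Real.norm_of_nonneg (by positivity), Int.norm_eq_abs]
  exact Real.rpow_le_rpow_of_nonpos hk (by linarith) (by linarith)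

theorem prod_one_add_norm_le_pow {ι E : Type*} [Fintype ι] [SeminormedAddCommGroup E]
    (x : ι → E) : ∏ i, (1 + ‖x i‖) ≤ (1 + ‖x‖) ^ Fintype.card ι := by
  calc ∏ i, (1 + ‖x i‖) ≤ ∏ _i : ι, (1 + ‖x‖) :=
        Finset.prod_le_prod (fun i _ => by positivity) fun i _ => by
          gcongr; exact norm_le_pi_norm x i
    _ = (1 + ‖x‖) ^ Fintype.card ι := by simp

noncomputable def intLatticeDecaySum (n : ℕ) (N : ℝ) : ℝ≥0∞ :=
  ∑' x : Fin n → ℤ, ENNReal.ofReal ((1 + ‖x‖) ^ (-N))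

theorem one_le_intLatticeDecaySum (n : ℕ) (N : ℝ) : 1 ≤ intLatticeDecaySum n N :=
  le_of_eq_of_le (by simp) (ENNReal.le_tsum (0 : Fin n → ℤ))

theorem intLatticeDecaySum_lt_top {n : ℕ} {N : ℝ} (hn : 1 ≤ n) (hN : n < N) :
    intLatticeDecaySum n N < ∞ := by
  have hn0 : (0 : ℝ) < n := by exact_mod_cast hn
  have hp : 1 < N / n := (one_lt_div hn0).2 hN
  have hsplit (x : Fin n → ℤ) : ENNReal.ofReal ((1 + ‖x‖) ^ (-N)) ≤
      ∏ i, ENNReal.ofReal ((1 + ‖x i‖) ^ (-(N / n))) := by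
    rw [← ENNReal.ofReal_prod_of_nonneg fun i _ => by positivity]
    refine ENNReal.ofReal_le_ofReal ?_
    calc (1 + ‖x‖) ^ (-N) = ((1 + ‖x‖) ^ n) ^ (-(N / n)) := by
          rw [← Real.rpow_natCast, ← Real.rpow_mul (by positivity)]
          field_simp
      _ ≤ (∏ i, (1 + ‖x i‖)) ^ (-(N / n)) :=
          Real.rpow_le_rpow_of_nonpos (by positivity)
            (by simpa using prod_one_add_norm_le_pow x) (by linarith)
      _ = ∏ i, (1 + ‖x i‖) ^ (-(N / n)) :=
          (Real.finsetProd_rpow _ _ (fun i _ => by positivity) _).symm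
  calc intLatticeDecaySum n N
      ≤ ∑' x : Fin n → ℤ, ∏ i, ENNReal.ofReal ((1 + ‖x i‖) ^ (-(N / n))) :=
        ENNReal.tsum_le_tsum hsplit
    _ = (∑' k : ℤ, ENNReal.ofReal ((1 + ‖k‖) ^ (-(N / n)))) ^ n :=
        ENNReal.tsum_fin_pi_prod (fun k : ℤ => ENNReal.ofReal ((1 + ‖k‖) ^ (-(N / n)))) n
    _ < ∞ := by
        rw [← ENNReal.ofReal_tsum_of_nonneg (fun k => by positivity)
          (summable_one_add_norm_int_rpow hp)]
        exact ENNReal.pow_lt_top ENNReal.ofReal_lt_top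

theorem Int.norm_le_mul_norm_mul_add_add {s : ℝ} (hs : 0 ≤ s) {L : ℕ} (hL : 1 ≤ s * L)
    (q : ℤ) (m : Fin L) : ‖q‖ ≤ s * ‖q * L + m‖ + s * L := by
  have hm : ‖(m : ℤ)‖ ≤ L := by simp [m.is_lt.le]
  have hqL : ‖q‖ * L ≤ ‖q * L + m‖ + L := by
    calc ‖q‖ * L = ‖q * L + m - m‖ := by simp
      _ ≤ ‖q * L + m‖ + ‖(m : ℤ)‖ := norm_sub_le _ _
      _ ≤ ‖q * L + m‖ + L := by gcongr
  nlinarith [norm_nonneg q]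

theorem norm_le_mul_norm_mul_add_add {ι : Type*} [Fintype ι] {s : ℝ} (hs : 0 ≤ s) {L : ℕ}
    (hL : 1 ≤ s * L) (q : ι → ℤ) (m : ι → Fin L) :
    ‖q‖ ≤ s * ‖fun i => q i * L + m i‖ + s * L := by
  refine (pi_norm_le_iff_of_nonneg (by positivity)).2 fun i => ?_
  calc ‖q i‖ ≤ s * ‖q i * L + m i‖ + s * L :=
        Int.norm_le_mul_norm_mul_add_add hs hL (q i) (m i)
    _ ≤ s * ‖fun i => q i * L + m i‖ + s * L := by
        gcongr
        exact norm_le_pi_norm (fun i => q i * (L : ℤ) + m i) i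

theorem tsum_one_add_mul_norm_rpow_le {n : ℕ} {N s : ℝ} (hN : 0 ≤ N) (hs0 : 0 < s)
    (hs1 : s ≤ 1) :
    ∑' x : Fin n → ℤ, ENNReal.ofReal ((1 + s * ‖x‖) ^ (-N)) ≤
      ENNReal.ofReal (3 ^ N * (2 / s) ^ n) * intLatticeDecaySum n N := by
  set L := ⌈1 / s⌉₊
  have hL1 : 1 ≤ s * L := by
    rw [← div_le_iff₀' hs0]; exact Nat.le_ceil _
  have hL2 : s * L ≤ 2 := by
    have h := mul_lt_mul_of_pos_left (Nat.ceil_lt_add_one (one_div_pos.2 hs0).le) hs0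
    rw [mul_add, mul_one_div_cancel hs0.ne'] at h
    linarith
  have : NeZero L := ⟨(Nat.ceil_pos.2 (by positivity)).ne'⟩
  let e : (Fin n → ℤ) ≃ (Fin n → ℤ) × (Fin n → Fin L) :=
    (Equiv.piCongrRight fun _ => Int.divModEquiv L).trans (Equiv.arrowProdEquivProdArrow _ _ _)
  have he (q : Fin n → ℤ) (m : Fin n → Fin L) : e.symm (q, m) = fun i => q i * L + m i := rfl
  have hcube (q : Fin n → ℤ) (m : Fin n → Fin L) :
      ENNReal.ofReal ((1 + s * ‖e.symm (q, m)‖) ^ (-N)) ≤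
        ENNReal.ofReal (3 ^ N) * ENNReal.ofReal ((1 + ‖q‖) ^ (-N)) := by
    rw [← ENNReal.ofReal_mul (by positivity), he]
    refine ENNReal.ofReal_le_ofReal (Real.rpow_neg_le_mul_rpow_neg_of_le_mul (by positivity)
      (by norm_num) hN ?_)
    have := norm_le_mul_norm_mul_add_add hs0.le hL1 q m
    nlinarith [norm_nonneg (fun i => q i * (L : ℤ) + m i)]
  calc ∑' x : Fin n → ℤ, ENNReal.ofReal ((1 + s * ‖x‖) ^ (-N))
      = ∑' (q : Fin n → ℤ) (m : Fin n → Fin L),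
          ENNReal.ofReal ((1 + s * ‖e.symm (q, m)‖) ^ (-N)) := by
        rw [← e.symm.tsum_eq, ENNReal.tsum_prod']
    _ ≤ ∑' (q : Fin n → ℤ) (_ : Fin n → Fin L),
          ENNReal.ofReal (3 ^ N) * ENNReal.ofReal ((1 + ‖q‖) ^ (-N)) :=
        ENNReal.tsum_le_tsum fun q => ENNReal.tsum_le_tsum fun m => hcube q m
    _ = ∑' q : Fin n → ℤ,
          (L : ℝ≥0∞) ^ n * (ENNReal.ofReal (3 ^ N) * ENNReal.ofReal ((1 + ‖q‖) ^ (-N))) :=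
        by
        simp
    _ = ENNReal.ofReal (3 ^ N * L ^ n) * intLatticeDecaySum n N := by
        rw [intLatticeDecaySum, ← ENNReal.tsum_mul_left]
        refine tsum_congr fun q => ?_
        rw [ENNReal.ofReal_mul (by positivity), ENNReal.ofReal_pow (by positivity),
          ENNReal.ofReal_natCast]
        ring
    _ ≤ ENNReal.ofReal (3 ^ N * (2 / s) ^ n) * intLatticeDecaySum n N := by
        gcongr
        rwa [le_div_iff₀' hs0]

theorem one_le_norm_of_ne_zero {ι : Type*} [Fintype ι] {x : ι → ℤ} (hx : x ≠ 0) :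
    1 ≤ ‖x‖ := by
  obtain ⟨i, hi⟩ := Function.ne_iff.1 hx
  calc (1 : ℝ) ≤ ‖x i‖ := by rw [Int.norm_eq_abs]; exact_mod_cast Int.one_le_abs hi
    _ ≤ ‖x‖ := norm_le_pi_norm x i

theorem tsum_ne_zero_one_add_mul_norm_rpow_le {n : ℕ} {N s : ℝ} (hN : 0 ≤ N) (hs : 0 < s) :
    ∑' x : {x : Fin n → ℤ // x ≠ 0}, ENNReal.ofReal ((1 + s * ‖(x : Fin n → ℤ)‖) ^ (-N))
      ≤ ENNReal.ofReal ((2 / s) ^ N) * intLatticeDecaySum n N := by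
  have hx (x : {x : Fin n → ℤ // x ≠ 0}) :
      ENNReal.ofReal ((1 + s * ‖(x : Fin n → ℤ)‖) ^ (-N)) ≤
        ENNReal.ofReal ((2 / s) ^ N) * ENNReal.ofReal ((1 + ‖(x : Fin n → ℤ)‖) ^ (-N)) := by
    rw [← ENNReal.ofReal_mul (by positivity)]
    refine ENNReal.ofReal_le_ofReal (Real.rpow_neg_le_mul_rpow_neg_of_le_mul (by positivity)
      (by positivity) hN ?_)
    have := one_le_norm_of_ne_zero x.2
    rw [mul_add, mul_one, ← mul_assoc, div_mul_cancel₀ 2 hs.ne']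
    linarith [(by positivity : 0 ≤ 2 / s)]
  calc _ ≤ ∑' x : {x : Fin n → ℤ // x ≠ 0},
        ENNReal.ofReal ((2 / s) ^ N) * ENNReal.ofReal ((1 + ‖(x : Fin n → ℤ)‖) ^ (-N)) :=
        ENNReal.tsum_le_tsum hx
    _ ≤ ∑' x : Fin n → ℤ,
          ENNReal.ofReal ((2 / s) ^ N) * ENNReal.ofReal ((1 + ‖x‖) ^ (-N)) :=
        ENNReal.tsum_comp_le_tsum_of_injective Subtype.val_injective _
    _ = ENNReal.ofReal ((2 / s) ^ N) * intLatticeDecaySum n N := ENNReal.tsum_mul_left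

theorem norm_mul_intCast {ι : Type*} [Fintype ι] {s : ℝ} (hs : 0 ≤ s) (x : ι → ℤ) :
    ‖fun i => s * (x i : ℝ)‖ = s * ‖x‖ := by
  change ‖s • fun i => (x i : ℝ)‖ = s * ‖x‖
  rw [norm_smul, Real.norm_of_nonneg hs]
  rfl

theorem coe_nnnorm_le_ofReal_mul_rpow_neg {E : Type*} [SeminormedAddCommGroup E] {v : E}
    {w N M : ℝ} (hw : 0 < w) (h : w ^ N * ‖v‖ ≤ M) :
    (‖v‖₊ : ℝ≥0∞) ≤ ENNReal.ofReal (M * w ^ (-N)) := by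
  rw [← ENNReal.ofReal_coe_nnreal, coe_nnnorm, Real.rpow_neg hw.le, ← div_eq_mul_inv]
  exact ENNReal.ofReal_le_ofReal ((le_div_iff₀' (by positivity)).2 h)

theorem tsum_nnnorm_dilate_le_of_decay {E : Type*} [SeminormedAddCommGroup E] {n : ℕ}
    {N M s : ℝ} {Ψ : (Fin n → ℝ) → E} (hΨ : ∀ x, (1 + ‖x‖) ^ N * ‖Ψ x‖ ≤ M) (hs : 0 ≤ s) :
    ∑' x : {x : Fin n → ℤ // x ≠ 0}, (‖Ψ (fun i => s * ((x : Fin n → ℤ) i : ℝ))‖₊ : ℝ≥0∞)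
      ≤ ENNReal.ofReal M * ∑' x : {x : Fin n → ℤ // x ≠ 0},
        ENNReal.ofReal ((1 + s * ‖(x : Fin n → ℤ)‖) ^ (-N)) := by
  rw [← ENNReal.tsum_mul_left]
  refine ENNReal.tsum_le_tsum fun x => ?_
  rw [← norm_mul_intCast hs, ← ENNReal.ofReal_mul' (by positivity)]
  exact coe_nnnorm_le_ofReal_mul_rpow_neg (by positivity) (hΨ _)

theorem tsum_nnnorm_dilate_le_of_le_one {E : Type*} [SeminormedAddCommGroup E] {n : ℕ}
    {N M s : ℝ} {Ψ : (Fin n → ℝ) → E} (hΨ : ∀ x, (1 + ‖x‖) ^ N * ‖Ψ x‖ ≤ M)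
    (hnN : n ≤ N) (hs0 : 0 < s) (hs1 : s ≤ 1) :
    ∑' x : {x : Fin n → ℤ // x ≠ 0}, (‖Ψ (fun i => s * ((x : Fin n → ℤ) i : ℝ))‖₊ : ℝ≥0∞) ≤
      ENNReal.ofReal M * (ENNReal.ofReal (6 ^ N * s ^ (-(n : ℝ))) * intLatticeDecaySum n N) := by
  have hconst : 3 ^ N * (2 / s) ^ n ≤ 6 ^ N * s ^ (-(n : ℝ)) :=
    calc 3 ^ N * (2 / s) ^ n = 3 ^ N * 2 ^ (n : ℝ) * s ^ (-(n : ℝ)) := by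
          rw [← Real.rpow_natCast, Real.div_rpow (by norm_num) hs0.le, Real.rpow_neg hs0.le]
          ring
      _ ≤ 3 ^ N * 2 ^ N * s ^ (-(n : ℝ)) := by gcongr; norm_num
      _ = 6 ^ N * s ^ (-(n : ℝ)) := by
          rw [← Real.mul_rpow (by norm_num) (by norm_num)]; norm_num
  refine (tsum_nnnorm_dilate_le_of_decay hΨ hs0.le).trans ?_
  gcongr
  calc _ ≤ ∑' x : Fin n → ℤ, ENNReal.ofReal ((1 + s * ‖x‖) ^ (-N)) :=
        ENNReal.tsum_comp_le_tsum_of_injective Subtype.val_injective _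
    _ ≤ _ := tsum_one_add_mul_norm_rpow_le ((Nat.cast_nonneg n).trans hnN) hs0 hs1
    _ ≤ _ := by gcongr

theorem tsum_nnnorm_dilate_le_of_one_le {E : Type*} [SeminormedAddCommGroup E] {n : ℕ}
    {N M r s : ℝ} {Ψ : (Fin n → ℝ) → E} (hΨ : ∀ x, (1 + ‖x‖) ^ N * ‖Ψ x‖ ≤ M)
    (hN : 0 ≤ N) (hrN : r ≤ N) (hs : 1 ≤ s) :
    ∑' x : {x : Fin n → ℤ // x ≠ 0}, (‖Ψ (fun i => s * ((x : Fin n → ℤ) i : ℝ))‖₊ : ℝ≥0∞) ≤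
      ENNReal.ofReal M * (ENNReal.ofReal (6 ^ N * s ^ (-r)) * intLatticeDecaySum n N) := by
  have hs0 : 0 < s := one_pos.trans_le hs
  have hconst : (2 / s) ^ N ≤ 6 ^ N * s ^ (-r) := by
    rw [Real.div_rpow (by norm_num) hs0.le, div_eq_mul_inv, ← Real.rpow_neg hs0.le]
    gcongr
    norm_num
  refine (tsum_nnnorm_dilate_le_of_decay hΨ hs0.le).trans ?_
  gcongr
  exact (tsum_ne_zero_one_add_mul_norm_rpow_le hN hs0).trans (by gcongr)

/-- For `n ≥ 1` and `r > 1` there is a constant `C > 0`, depending only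
on `n` and `r`, such that for every `Ψ : ℝⁿ → ℂ` with
`(1 + ‖x‖)^{n+r}·|Ψ(x)| ≤ M` for all `x`, and every `s > 0`:
`∑_{x ∈ ℤⁿ, x ≠ 0} |Ψ(s·x)| ≤ C·M·s^{-n}` if `s ≤ 1`, and `≤ C·M·s^{-r}` if `s ≥ 1`
(the sums being taken in `[0,∞]`, so that they are in particular finite). -/
theorem statement15 (n : ℕ) (hn : 1 ≤ n) (r : ℝ) (hr : 1 < r) :
    ∃ C : ℝ, 0 < C ∧ ∀ (Ψ : (Fin n → ℝ) → ℂ) (M : ℝ),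
      (∀ x : Fin n → ℝ, (1 + ‖x‖) ^ ((n : ℝ) + r) * ‖Ψ x‖ ≤ M) →
      ∀ s : ℝ, 0 < s →
        (s ≤ 1 →
          ∑' x : {x : Fin n → ℤ // x ≠ 0},
              (‖Ψ (fun i => s * ((x : Fin n → ℤ) i : ℝ))‖₊ : ENNReal)
            ≤ ENNReal.ofReal (C * M * s ^ (-(n : ℝ)))) ∧
        (1 ≤ s →
          ∑' x : {x : Fin n → ℤ // x ≠ 0},
              (‖Ψ (fun i => s * ((x : Fin n → ℤ) i : ℝ))‖₊ : ENNReal)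
            ≤ ENNReal.ofReal (C * M * s ^ (-r))) := by
  set N : ℝ := n + r
  have hN : 0 ≤ N := by positivity
  set S := intLatticeDecaySum n N
  have hS : S ≠ ∞ := (intLatticeDecaySum_lt_top hn (by linarith)).ne
  have hS1 : 1 ≤ S.toReal := by simpa using ENNReal.toReal_mono hS (one_le_intLatticeDecaySum n N)
  refine ⟨6 ^ N * S.toReal, by positivity, fun Ψ M hΨ s hs => ?_⟩
  have hM : 0 ≤ M := (hΨ 0).trans' (by positivity)
  have hC {t : ℝ} (ht : 0 ≤ t) : ENNReal.ofReal M * (ENNReal.ofReal (6 ^ N * t) * S) =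
      ENNReal.ofReal (6 ^ N * S.toReal * M * t) := by
    rw [← ENNReal.ofReal_toReal hS, ← ENNReal.ofReal_mul (by positivity), ← ENNReal.ofReal_mul hM,
      ENNReal.toReal_ofReal ENNReal.toReal_nonneg]
    ring_nf
  refine ⟨fun hs1 => ?_, fun hs1 => ?_⟩
  · exact (tsum_nnnorm_dilate_le_of_le_one hΨ (le_add_of_nonneg_right (by linarith)) hs
      hs1).trans_eq (hC (by positivity))
  · exact (tsum_nnnorm_dilate_le_of_one_le hΨ hN (le_add_of_nonneg_left n.cast_nonneg)
      hs1).trans_eq (hC (by positivity))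
end
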